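/- arXiv:1304.6440 — 3 statements merged into one kernel-verified Lean document; each statement's English description precedes it below -/
import Mathlib

section
/- Let R : ℝ → ℝ be locally integrable with R(t) = O(|t|^s) for some s > 0 as |t| → ∞, and let ψ be a Schwartz function. If there exist constants C, x₀ > 0 and α > 0 such that |∫_{-∞}^{∞} R(t) ψ(x - t) dt| ≥ C x^α for all x > x₀, then there exist constants C', X₀ > 0 such that (1/X) ∫_X^{2X} |R(t)| dt ≥ C' X^α for all X > X₀. -/
/-! On the window `x ∈ [5X/4, 7X/4]`, split `∫ R(t) ψ(x - t) dt` into the part over `(X, 2X]`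
and the rest. Peetre's inequality `1 + |t| ≤ (1 + |x|)(1 + |x - t|)` and the decay
`|ψ u| ≪ (1 + |u|)^(-(2s+3))` make the rest `O(1/X)`, so for large `X` the convolution of
`|R| · 1_(X,2X]` with `|ψ|` is at least `(C/2) X^α` on the whole window. Integrating over the
window, of length `X/2`, and using `∫ (f ⋆ g) = ∫ f · ∫ g` gives
`(C/4) X^(α+1) ≤ ‖ψ‖₁ ∫_X^{2X} |R|`. -/

open MeasureTheory Real Filter Set

open scoped Convolution

namespace SchwartzMap

theorem exists_abs_le_mul_one_add_abs_rpow_neg (ψ : 𝓢(ℝ, ℝ)) (k : ℝ) :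
    ∃ B, ∀ u, |ψ u| ≤ B * (1 + |u|) ^ (-k) := by
  set n := ⌈k⌉₊
  refine ⟨2 ^ n * (Finset.Iic (n, 0)).sup (fun m => SchwartzMap.seminorm ℝ m.1 m.2) ψ,
    fun u => ?_⟩
  have hbase : 1 ≤ 1 + |u| := le_add_of_nonneg_right (abs_nonneg u)
  have hdecay := one_add_le_sup_seminorm_apply (𝕜 := ℝ) (m := (n, 0)) le_rfl le_rfl ψ u
  rw [norm_iteratedFDeriv_zero, Real.norm_eq_abs, Real.norm_eq_abs] at hdecay
  calc |ψ u| = (1 + |u|) ^ n * |ψ u| * (1 + |u|) ^ (-(n : ℝ)) := by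
        rw [rpow_neg (by positivity), rpow_natCast, mul_comm, ← mul_assoc,
          inv_mul_cancel₀ (by positivity), one_mul]
    _ ≤ _ * (1 + |u|) ^ (-k) := by
        gcongr
        exact Nat.le_ceil k

end SchwartzMap

theorem one_add_abs_le_mul_one_add_abs_sub (x t : ℝ) : 1 + |t| ≤ (1 + |x|) * (1 + |x - t|) := by
  have : |t| ≤ |x| + |x - t| := by simpa using abs_sub x (x - t)
  nlinarith [abs_nonneg x, abs_nonneg (x - t)]

theorem integrable_one_add_abs_rpow_neg {r : ℝ} (hr : 1 < r) :
    Integrable fun u : ℝ => (1 + |u|) ^ (-r) := by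
  simpa using integrable_one_add_norm (E := ℝ) (μ := volume) (r := r) (by simpa using hr)

theorem mul_rpow_mul_rpow_neg_add_one {c y : ℝ} (hc : 0 ≤ c) (hy : 0 < y) (s : ℝ) :
    (c * y) ^ s * y ^ (-(s + 1)) = c ^ s / y := by
  rw [mul_rpow hc hy.le, mul_assoc, ← rpow_add hy, neg_add, add_neg_cancel_left, rpow_neg_one,
    div_eq_mul_inv]

theorem mul_measureReal_le_setIntegral_mul_integral {G : Type*} [AddGroup G] [MeasurableSpace G]
    [MeasurableAdd₂ G] [MeasurableNeg G] {μ : Measure G} [SFinite μ] [μ.IsAddRightInvariant]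
    {f g : G → ℝ} {S T : Set G} {c : ℝ} (hf : IntegrableOn f T μ) (hg : Integrable g μ)
    (hf0 : ∀ t ∈ T, 0 ≤ f t) (hg0 : 0 ≤ g) (hS : MeasurableSet S) (hSμ : μ S ≠ ⊤)
    (hT : MeasurableSet T) (hc : ∀ x ∈ S, c ≤ ∫ t in T, f t * g (x - t) ∂μ) :
    c * μ.real S ≤ (∫ t in T, f t ∂μ) * ∫ u, g u ∂μ := by
  have hfT : Integrable (T.indicator f) μ := (integrable_indicator_iff hT).2 hf
  set F := T.indicator f ⋆[ContinuousLinearMap.mul ℝ ℝ, μ] g with hF_def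
  have hF : ∀ x, F x = ∫ t in T, f t * g (x - t) ∂μ := fun x => by
    rw [hF_def, convolution_def, ← integral_indicator hT]
    congr 1 with t
    by_cases ht : t ∈ T <;> simp [ht]
  have hFint : Integrable F μ := hfT.integrable_convolution _ hg
  calc c * μ.real S ≤ ∫ x in S, F x ∂μ :=
        setIntegral_ge_of_const_le_real hS hSμ (fun x hx => (hF x).symm ▸ hc x hx)
          hFint.integrableOn
    _ ≤ ∫ x, F x ∂μ := setIntegral_le_integral hFint <| ae_of_all _ fun x =>
        (hF x).symm ▸ setIntegral_nonneg hT fun t ht => mul_nonneg (hf0 t ht) (hg0 _)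
    _ = (∫ t in T, f t ∂μ) * ∫ u, g u ∂μ := by
        rw [integral_convolution _ hfT hg, integral_indicator hT]
        rfl

theorem abs_integral_le_setIntegral_abs_add_compl {Ω : Type*} [MeasurableSpace Ω]
    {μ : Measure Ω} {f : Ω → ℝ} (hf : Integrable f μ) {S : Set Ω} (hS : MeasurableSet S) :
    |∫ x, f x ∂μ| ≤ ∫ x in S, |f x| ∂μ + ∫ x in Sᶜ, |f x| ∂μ := by
  rw [integral_add_compl hS hf.abs]
  exact abs_integral_le_integral_abs

section GrowthDecay

variable {R ψ : ℝ → ℝ} {A B s k : ℝ}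

theorem abs_mul_comp_sub_le (hA : 0 ≤ A) (hs : 0 ≤ s) (hRA : ∀ t, |R t| ≤ A * (1 + |t|) ^ s)
    (hψB : ∀ u, |ψ u| ≤ B * (1 + |u|) ^ (-k)) (x t : ℝ) :
    |R t * ψ (x - t)| ≤ A * B * (1 + |x|) ^ s * (1 + |x - t|) ^ (s - k) := by
  have hxt : 0 < 1 + |x - t| := by positivity
  calc |R t * ψ (x - t)| = |R t| * |ψ (x - t)| := abs_mul _ _
    _ ≤ A * ((1 + |x|) * (1 + |x - t|)) ^ s * (B * (1 + |x - t|) ^ (-k)) := by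
        refine mul_le_mul ((hRA t).trans ?_) (hψB _) (abs_nonneg _) (by positivity)
        gcongr
        exact one_add_abs_le_mul_one_add_abs_sub x t
    _ = A * B * (1 + |x|) ^ s * (1 + |x - t|) ^ (s - k) := by
        rw [mul_rpow (by positivity) hxt.le, rpow_sub hxt, rpow_neg hxt.le]
        ring

theorem integrable_mul_comp_sub (hR : AEStronglyMeasurable R) (hψ : Continuous ψ) (hA : 0 ≤ A)
    (hs : 0 ≤ s) (hRA : ∀ t, |R t| ≤ A * (1 + |t|) ^ s)
    (hψB : ∀ u, |ψ u| ≤ B * (1 + |u|) ^ (-k)) (hk : s + 1 < k) (x : ℝ) :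
    Integrable fun t => R t * ψ (x - t) := by
  have hkernel := ((integrable_one_add_abs_rpow_neg (r := k - s) (by linarith)).comp_sub_left
    x).const_mul (A * B * (1 + |x|) ^ s)
  refine hkernel.mono' (hR.mul (hψ.comp (continuous_sub_left x)).aestronglyMeasurable)
    (ae_of_all _ fun t => ?_)
  rw [Real.norm_eq_abs, neg_sub]
  exact abs_mul_comp_sub_le hA hs hRA hψB x t

theorem setIntegral_abs_mul_comp_sub_le (hA : 0 ≤ A) (hs : 0 ≤ s)
    (hRA : ∀ t, |R t| ≤ A * (1 + |t|) ^ s) (hψB : ∀ u, |ψ u| ≤ B * (1 + |u|) ^ (-k))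
    (hk : s + 2 ≤ k) {S : Set ℝ} (hS : MeasurableSet S) {x r : ℝ} (hr : 0 < r)
    (hfar : ∀ t ∈ S, r ≤ 1 + |x - t|) :
    ∫ t in S, |R t * ψ (x - t)| ≤
      A * B * (1 + |x|) ^ s * r ^ (s + 2 - k) * ∫ u, (1 + |u|) ^ (-2 : ℝ) := by
  have hB : 0 ≤ B := nonneg_of_mul_nonneg_left ((abs_nonneg _).trans (hψB 0)) (by positivity)
  set K := A * B * (1 + |x|) ^ s * r ^ (s + 2 - k) with hK_def
  have hkernel : Integrable fun t => K * (1 + |x - t|) ^ (-2 : ℝ) :=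
    ((integrable_one_add_abs_rpow_neg one_lt_two).comp_sub_left x).const_mul K
  have hpoint : ∀ t ∈ S, |R t * ψ (x - t)| ≤ K * (1 + |x - t|) ^ (-2 : ℝ) := fun t ht => by
    have hxt : 0 < 1 + |x - t| := by positivity
    calc |R t * ψ (x - t)| ≤ A * B * (1 + |x|) ^ s * (1 + |x - t|) ^ (s - k) :=
          abs_mul_comp_sub_le hA hs hRA hψB x t
      _ = A * B * (1 + |x|) ^ s * (1 + |x - t|) ^ (s + 2 - k) * (1 + |x - t|) ^ (-2 : ℝ) := by
          rw [mul_assoc _ ((1 + |x - t|) ^ _), ← rpow_add hxt]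
          ring_nf
      _ ≤ K * (1 + |x - t|) ^ (-2 : ℝ) := by
          have hdecay := rpow_le_rpow_of_nonpos hr (hfar t ht) (by linarith : s + 2 - k ≤ 0)
          rw [hK_def]
          gcongr ?_ * _
          exact mul_le_mul_of_nonneg_left hdecay (by positivity)
  calc ∫ t in S, |R t * ψ (x - t)|
      ≤ ∫ t in S, K * (1 + |x - t|) ^ (-2 : ℝ) :=
        integral_mono_of_nonneg (ae_of_all _ fun t => abs_nonneg _) hkernel.integrableOn
          ((ae_restrict_iff' hS).2 (ae_of_all _ hpoint))
    _ ≤ ∫ t, K * (1 + |x - t|) ^ (-2 : ℝ) :=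
        setIntegral_le_integral hkernel (ae_of_all _ fun t => by positivity)
    _ = K * ∫ u, (1 + |u|) ^ (-2 : ℝ) := by
        rw [integral_const_mul, integral_sub_left_eq_self (fun u : ℝ => (1 + |u|) ^ (-2 : ℝ))]

end GrowthDecay

theorem eventually_setIntegral_compl_Ioc_le {R ψ : ℝ → ℝ} {A B s : ℝ} (hA : 0 ≤ A)
    (hs : 0 ≤ s) (hRA : ∀ t, |R t| ≤ A * (1 + |t|) ^ s)
    (hψB : ∀ u, |ψ u| ≤ B * (1 + |u|) ^ (-(2 * s + 3)))
    {ε : ℝ} (hε : 0 < ε) :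
    ∀ᶠ X in atTop, ∀ x ∈ Icc (5 / 4 * X) (7 / 4 * X),
      ∫ t in (Ioc X (2 * X))ᶜ, |R t * ψ (x - t)| ≤ ε := by
  set J := ∫ u : ℝ, (1 + |u|) ^ (-2 : ℝ)
  have hJ : 0 ≤ J := integral_nonneg fun u => by positivity
  have hB : 0 ≤ B := nonneg_of_mul_nonneg_left ((abs_nonneg _).trans (hψB 0)) (by positivity)
  have hsmall : ∀ᶠ X in atTop, A * B * 12 ^ s / (X / 4) * J ≤ ε :=
    ((tendsto_const_nhds.div_atTop (tendsto_id.atTop_div_const (by norm_num))).mul_const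
      J).eventually (ge_mem_nhds (by simpa using hε))
  filter_upwards [hsmall, eventually_ge_atTop 1] with X hX hX1 x ⟨hx5, hx7⟩
  have hfar : ∀ t ∈ (Ioc X (2 * X))ᶜ, X / 4 ≤ 1 + |x - t| := fun t ht => by
    rcases not_and_or.1 ht with ht | ht <;> cases abs_cases (x - t) <;> linarith
  calc ∫ t in (Ioc X (2 * X))ᶜ, |R t * ψ (x - t)|
      ≤ A * B * (1 + |x|) ^ s * (X / 4) ^ (s + 2 - (2 * s + 3)) * J :=
        setIntegral_abs_mul_comp_sub_le hA hs hRA hψB (by linarith) measurableSet_Ioc.compl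
          (by positivity) hfar
    _ ≤ A * B * ((12 * (X / 4)) ^ s * (X / 4) ^ (-(s + 1))) * J := by
        rw [show s + 2 - (2 * s + 3) = -(s + 1) by ring, mul_assoc (A * B)]
        gcongr
        rw [abs_of_pos (by linarith)]
        linarith
    _ = A * B * 12 ^ s / (X / 4) * J := by
        rw [mul_rpow_mul_rpow_neg_add_one (by norm_num) (by positivity)]
        ring
    _ ≤ ε := hX

theorem mul_le_intervalIntegral_abs_mul_integral {R g : ℝ → ℝ} (hR : LocallyIntegrable R)
    (hg : Integrable g) (hg0 : 0 ≤ g) {X c : ℝ} (hX : 0 < X)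
    (hc : ∀ x ∈ Icc (5 / 4 * X) (7 / 4 * X), c ≤ ∫ t in Ioc X (2 * X), |R t| * g (x - t)) :
    c * (X / 2) ≤ (∫ t in X..(2 * X), |R t|) * ∫ u, g u := by
  have hwindow := mul_measureReal_le_setIntegral_mul_integral
    ((hR.integrableOn_isCompact isCompact_Icc).mono_set Ioc_subset_Icc_self).abs hg
    (fun _ _ => abs_nonneg _) hg0 measurableSet_Icc measure_Icc_lt_top.ne measurableSet_Ioc hc
  rw [Real.volume_real_Icc_of_le (by linarith)] at hwindow
  rw [intervalIntegral.integral_of_le (by linarith)]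
  linarith

theorem sarnak_calculus_lemma_general
    (R : ℝ → ℝ) (hR : LocallyIntegrable R volume)
    (s : ℝ) (hs : 0 < s)
    (hgrowth : ∃ C : ℝ, 0 < C ∧ ∀ t : ℝ, |R t| ≤ C * (1 + |t|) ^ s)
    (ψ : SchwartzMap ℝ ℝ)
    (α C x₀ : ℝ) (hα : 0 < α) (hC : 0 < C)
    (hlow : ∀ x : ℝ, x₀ < x → C * x ^ α ≤ |∫ t : ℝ, R t * ψ (x - t)|) :
    ∃ C' X₀ : ℝ, 0 < C' ∧ 0 < X₀ ∧
      ∀ X : ℝ, X₀ < X → C' * X ^ α ≤ (1 / X) * ∫ t in X..(2 * X), |R t| := by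
  obtain ⟨A, hA, hRA⟩ := hgrowth
  obtain ⟨B, hψB⟩ := ψ.exists_abs_le_mul_one_add_abs_rpow_neg (2 * s + 3)
  have hwindow : ∀ᶠ X in atTop, ∀ x ∈ Icc (5 / 4 * X) (7 / 4 * X),
      C / 2 * X ^ α ≤ ∫ t in Ioc X (2 * X), |R t| * |ψ (x - t)| := by
    filter_upwards [eventually_setIntegral_compl_Ioc_le hA.le hs.le hRA hψB (half_pos hC),
      eventually_ge_atTop 1, eventually_gt_atTop x₀] with X htail hX1 hXx₀ x hx
    have hsplit := abs_integral_le_setIntegral_abs_add_compl (integrable_mul_comp_sub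
      hR.aestronglyMeasurable ψ.continuous hA.le hs.le hRA hψB (by linarith) x)
      (measurableSet_Ioc (a := X) (b := 2 * X))
    simp_rw [abs_mul] at hsplit htail
    have hXx : X ≤ x := by linarith [hx.1]
    nlinarith [hlow x (by linarith), htail x hx, one_le_rpow hX1 hα.le,
      rpow_le_rpow (by linarith) hXx hα.le]
  have haverage : ∀ᶠ X in atTop,
      C / (4 * ((∫ u, |ψ u|) + 1)) * X ^ α ≤ (1 / X) * ∫ t in X..(2 * X), |R t| := by
    filter_upwards [hwindow, eventually_gt_atTop 0] with X hX hX0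
    have hmass := mul_le_intervalIntegral_abs_mul_integral hR ψ.integrable.abs
      (fun _ => abs_nonneg _) hX0 hX
    have hI : 0 ≤ ∫ t in X..(2 * X), |R t| :=
      intervalIntegral.integral_nonneg (by linarith) fun _ _ => abs_nonneg _
    rw [div_mul_eq_mul_div, one_div_mul_eq_div, div_le_div_iff₀ (by positivity) hX0]
    nlinarith
  obtain ⟨X₀, hX₀⟩ := eventually_atTop.1 haverage
  exact ⟨_, max X₀ 1, by positivity, by positivity,
    fun X hX => hX₀ X ((le_max_left _ _).trans hX.le)⟩

/-- Sarnak's calculus lemma: a pointwise lower bound on the smoothed remainder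
implies an averaged lower bound. -/
theorem sarnak_calculus_lemma
    (R : ℝ → ℝ) (hR : LocallyIntegrable R volume)
    (s : ℝ) (hs : 0 < s)
    (hgrowth : ∃ C : ℝ, 0 < C ∧ ∀ t : ℝ, |R t| ≤ C * (1 + |t|) ^ s)
    (ψ : SchwartzMap ℝ ℝ)
    (α C x₀ : ℝ) (hα : 0 < α) (hC : 0 < C) (hx₀ : 0 < x₀)
    (hlow : ∀ x : ℝ, x₀ < x → C * x ^ α ≤ |∫ t : ℝ, R t * ψ (x - t)|) :
    ∃ C' X₀ : ℝ, 0 < C' ∧ 0 < X₀ ∧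
      ∀ X : ℝ, X₀ < X → C' * X ^ α ≤ (1 / X) * ∫ t in X..(2 * X), |R t| :=
  sarnak_calculus_lemma_general R hR s hs hgrowth ψ α C x₀ hα hC hlow
end

section
/- Let M be a smooth compact n-dimensional Riemannian manifold with boundary (n ≥ 2) such that ∫_M 𝒦 dV + 2n ∫_{∂M} H dA ≠ 0, where 𝒦 is the scalar curvature and H the mean curvature of the boundary. Assume the two-term smoothed Weyl expansion ∫ N(λ) ψ(λ − t) dt = Σ_{j≥0} a_j λ^{n−j} + O(λ^{−∞}) holds with a_2 = C(∫_M 𝒦 + 2n ∫_{∂M} H) for a nonzero constant C. Then the Weyl remainder satisfies (1/λ) ∫_λ^{2λ} |R(τ)| dτ ≫ λ^{n−2}. -/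
/-!
Since `𝓕ψ ≡ 1` near `0`, `∫ ψ = 1` and all higher moments of `ψ` vanish, so convolution with `ψ`
fixes polynomials. Hence the smoothed remainder `(R ⋆ ψ)(μ)` is the smoothed counting function minus
the first two Weyl terms, i.e. `a₂ μⁿ⁻² + O(μⁿ⁻³)`, and is `≥ |a₂|/2 μⁿ⁻²` for large `μ`.
For `μ ∈ [5λ/4, 7λ/4]` the part of `(R ⋆ ψ)(μ)` coming from `t ∉ [λ, 2λ]` is `O(1/λ)`, because `R`
grows polynomially and `ψ` decays rapidly; so `(1_{[λ,2λ]} |R|) ⋆ |ψ| ≥ |a₂|/4 λⁿ⁻²` there.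
Integrating over `[5λ/4, 7λ/4]` and using `∫ (F ⋆ G) = ∫ F · ∫ G` gives `‖ψ‖₁ ∫_λ^{2λ} |R| ≫ λⁿ⁻¹`
(Sarnak's calculus lemma).
-/

open MeasureTheory Real Filter Asymptotics FourierTransform
open scoped SchwartzMap Convolution

namespace SchwartzMap

variable (ψ : 𝓢(ℝ, ℝ))

theorem exists_one_add_abs_pow_mul_le (k : ℕ) :
    ∃ C, 0 ≤ C ∧ ∀ u, (1 + |u|) ^ k * |ψ u| ≤ C * (1 + u ^ 2)⁻¹ := by
  set C := 2 ^ (k + 2) *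
    (Finset.Iic ((k + 2, 0) : ℕ × ℕ)).sup (fun m => SchwartzMap.seminorm ℝ m.1 m.2) ψ
  refine ⟨C, by positivity, fun u => ?_⟩
  have hC : (1 + |u|) ^ (k + 2) * |ψ u| ≤ C := by
    simpa using ψ.one_add_le_sup_seminorm_apply (𝕜 := ℝ) (m := (k + 2, 0)) le_rfl le_rfl u
  rw [← div_eq_mul_inv, le_div_iff₀ (by positivity)]
  calc (1 + |u|) ^ k * |ψ u| * (1 + u ^ 2) ≤ (1 + |u|) ^ k * |ψ u| * (1 + |u|) ^ 2 := by
        gcongr; nlinarith [abs_nonneg u, sq_abs u]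
    _ = (1 + |u|) ^ (k + 2) * |ψ u| := by ring
    _ ≤ C := hC

theorem integrable_pow_smul_ofReal (k : ℕ) : Integrable (fun x : ℝ => x ^ k • (ψ x : ℂ)) :=
  (ψ.integrable_pow_mul volume k).mono' (by fun_prop) (Eventually.of_forall fun x => by simp)

theorem integrable_pow_mul_real (k : ℕ) : Integrable (fun x : ℝ => x ^ k * ψ x) :=
  (ψ.integrable_pow_mul volume k).mono' (by fun_prop) (Eventually.of_forall fun x => by simp)

theorem iteratedDeriv_fourier_zero (k : ℕ) :
    iteratedDeriv k (𝓕 fun t : ℝ => (ψ t : ℂ)) 0 =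
      (-2 * π * Complex.I) ^ k * ↑(∫ t, t ^ k * ψ t) := by
  rw [Real.iteratedDeriv_fourier (N := ⊤) (fun j _ => ψ.integrable_pow_smul_ofReal j) le_top,
    Real.fourier_real_eq, ← integral_complex_ofReal, ← integral_const_mul]
  congr 1 with t
  simp only [mul_zero, neg_zero, AddChar.map_zero_eq_one, one_smul, smul_eq_mul, Complex.ofReal_mul,
    Complex.ofReal_pow, mul_pow]
  ring

variable {ψ}

theorem integral_pow_mul_eq_ite (hψ : (𝓕 fun t : ℝ => (ψ t : ℂ)) =ᶠ[nhds 0] fun _ => 1) (k : ℕ) :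
    ∫ t, t ^ k * ψ t = if k = 0 then 1 else 0 := by
  have h := ψ.iteratedDeriv_fourier_zero k
  rw [hψ.iteratedDeriv_eq, iteratedDeriv_const] at h
  split_ifs at h ⊢ with hk
  · subst hk; simpa using h.symm
  · have : (-2 * π * Complex.I) ^ k ≠ 0 := pow_ne_zero _ (by simp [pi_ne_zero, Complex.I_ne_zero])
    exact_mod_cast (mul_eq_zero.1 h.symm).resolve_left this

theorem integral_pow_mul_comp_sub (hψ : (𝓕 fun t : ℝ => (ψ t : ℂ)) =ᶠ[nhds 0] fun _ => 1)
    (m : ℕ) (c : ℝ) : ∫ t, t ^ m * ψ (c - t) = c ^ m := by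
  calc ∫ t, t ^ m * ψ (c - t) = ∫ u, (-u + c) ^ m * ψ u := by
        simpa using integral_sub_left_eq_self (fun u => (-u + c) ^ m * ψ u) volume c
    _ = ∑ i ∈ Finset.range (m + 1), (-1) ^ i * c ^ (m - i) * m.choose i * ∫ u, u ^ i * ψ u := by
        simp_rw [add_pow, Finset.sum_mul]
        rw [integral_finsetSum _ fun i _ => ?_]
        · refine Finset.sum_congr rfl fun i _ => ?_
          rw [← integral_const_mul]
          congr 1 with u
          ring
        · exact ((ψ.integrable_pow_mul_real i).const_mul ((-1) ^ i * c ^ (m - i) * m.choose i)).congr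
            (Eventually.of_forall fun u => by simp only; ring)
    _ = c ^ m := by simp [integral_pow_mul_eq_ite hψ]

end SchwartzMap

def HasPolynomialGrowth (f : ℝ → ℝ) : Prop :=
  ∃ D : ℝ, 0 ≤ D ∧ ∃ p : ℕ, ∀ t, |f t| ≤ D * (1 + |t|) ^ p

theorem one_add_abs_pow_le_mul (c t : ℝ) (p : ℕ) :
    (1 + |t|) ^ p ≤ (1 + |c|) ^ p * (1 + |c - t|) ^ p := by
  rw [← mul_pow]
  gcongr
  nlinarith [abs_nonneg c, abs_nonneg (c - t), abs_sub_abs_le_abs_sub t c, abs_sub_comm t c]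

theorem abs_mul_comp_sub_mul_le {f ψ : ℝ → ℝ} {D C : ℝ} {p q : ℕ} (hD : 0 ≤ D)
    (hf : ∀ t, |f t| ≤ D * (1 + |t|) ^ p)
    (hψ : ∀ u, (1 + |u|) ^ (p + q) * |ψ u| ≤ C * (1 + u ^ 2)⁻¹) (c t : ℝ) :
    |f t * ψ (c - t)| * (1 + |c - t|) ^ q ≤ D * (1 + |c|) ^ p * (C * (1 + (c - t) ^ 2)⁻¹) :=
  calc |f t * ψ (c - t)| * (1 + |c - t|) ^ q
      ≤ D * ((1 + |c|) ^ p * (1 + |c - t|) ^ p) * |ψ (c - t)| * (1 + |c - t|) ^ q := by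
        rw [abs_mul]
        gcongr
        exact (hf t).trans (by gcongr; exact one_add_abs_pow_le_mul c t p)
    _ = D * (1 + |c|) ^ p * ((1 + |c - t|) ^ (p + q) * |ψ (c - t)|) := by ring
    _ ≤ D * (1 + |c|) ^ p * (C * (1 + (c - t) ^ 2)⁻¹) :=
        mul_le_mul_of_nonneg_left (hψ _) (by positivity)

namespace HasPolynomialGrowth

variable {f g : ℝ → ℝ}

theorem of_abs_le_rpow {C s : ℝ} (h : ∀ t, |f t| ≤ C * (1 + |t|) ^ s) :
    HasPolynomialGrowth f := by
  have hC : 0 ≤ C := by simpa using (abs_nonneg _).trans (h 0)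
  refine ⟨C, hC, ⌈s⌉₊, fun t => (h t).trans ?_⟩
  rw [← Real.rpow_natCast]
  gcongr
  · linarith [abs_nonneg t]
  · exact Nat.le_ceil s

theorem pow (m : ℕ) : HasPolynomialGrowth (fun t => t ^ m) :=
  ⟨1, zero_le_one, m, fun t => by rw [one_mul, abs_pow]; gcongr; linarith⟩

theorem const_mul (hf : HasPolynomialGrowth f) (c : ℝ) :
    HasPolynomialGrowth (fun t => c * f t) := by
  obtain ⟨D, hD, p, h⟩ := hf
  exact ⟨|c| * D, by positivity, p, fun t => by rw [abs_mul, mul_assoc]; gcongr; exact h t⟩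

theorem sub (hf : HasPolynomialGrowth f) (hg : HasPolynomialGrowth g) :
    HasPolynomialGrowth (fun t => f t - g t) := by
  obtain ⟨D₁, hD₁, p₁, h₁⟩ := hf
  obtain ⟨D₂, hD₂, p₂, h₂⟩ := hg
  refine ⟨D₁ + D₂, by positivity, max p₁ p₂, fun t => ?_⟩
  have ht : 1 ≤ 1 + |t| := by linarith [abs_nonneg t]
  calc |f t - g t| ≤ D₁ * (1 + |t|) ^ p₁ + D₂ * (1 + |t|) ^ p₂ :=
        (abs_sub _ _).trans (add_le_add (h₁ t) (h₂ t))
    _ ≤ D₁ * (1 + |t|) ^ max p₁ p₂ + D₂ * (1 + |t|) ^ max p₁ p₂ := by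
        gcongr <;> first | exact ht | omega
    _ = (D₁ + D₂) * (1 + |t|) ^ max p₁ p₂ := by ring

theorem integrableOn_Icc (hf : HasPolynomialGrowth f) (hfm : AEStronglyMeasurable f) (a b : ℝ) :
    IntegrableOn f (Set.Icc a b) := by
  obtain ⟨D, hD, p, h⟩ := hf
  refine Measure.integrableOn_of_bounded (by simp) hfm (M := D * (1 + max |a| |b|) ^ p)
    ((ae_restrict_iff' measurableSet_Icc).2 (Eventually.of_forall fun t ht => ?_))
  exact (h t).trans (by gcongr; exact abs_le_max_abs_abs ht.1 ht.2)

theorem integrable_mul_comp_sub (hf : HasPolynomialGrowth f) (hfm : AEStronglyMeasurable f)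
    (ψ : 𝓢(ℝ, ℝ)) (c : ℝ) : Integrable (fun t => f t * ψ (c - t)) := by
  obtain ⟨D, hD, p, hfD⟩ := hf
  obtain ⟨C, -, hψC⟩ := ψ.exists_one_add_abs_pow_mul_le (p + 0)
  refine (((integrable_inv_one_add_sq.comp_sub_left c).const_mul C).const_mul
    (D * (1 + |c|) ^ p)).mono' (hfm.mul (by fun_prop)) (Eventually.of_forall fun t => ?_)
  simpa using abs_mul_comp_sub_mul_le hD hfD hψC c t

theorem integral_sub_const_mul_pow_mul_comp_sub (hf : HasPolynomialGrowth f)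
    (hfm : AEStronglyMeasurable f) {ψ : 𝓢(ℝ, ℝ)}
    (hψ : (𝓕 fun t : ℝ => (ψ t : ℂ)) =ᶠ[nhds 0] fun _ => 1) (b : ℝ) (m : ℕ) (c : ℝ) :
    ∫ t, (f t - b * t ^ m) * ψ (c - t) = (∫ t, f t * ψ (c - t)) - b * c ^ m := by
  simp_rw [sub_mul, mul_assoc]
  rw [integral_sub (hf.integrable_mul_comp_sub hfm ψ c)
    (((pow m).integrable_mul_comp_sub (by fun_prop) ψ c).const_mul b), integral_const_mul,
    ψ.integral_pow_mul_comp_sub hψ]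

theorem exists_setIntegral_abs_mul_comp_sub_le (hf : HasPolynomialGrowth f) (ψ : 𝓢(ℝ, ℝ)) :
    ∃ K : ℝ, ∃ p : ℕ, 0 ≤ K ∧ ∀ (c r : ℝ) (S : Set ℝ), MeasurableSet S → 0 ≤ r →
      (∀ t ∈ S, r ≤ |c - t|) →
        ∫ t in S, |f t * ψ (c - t)| ≤ K * (1 + |c|) ^ p / (1 + r) ^ (p + 1) := by
  obtain ⟨D, hD, p, hfD⟩ := hf
  obtain ⟨C, hC, hψC⟩ := ψ.exists_one_add_abs_pow_mul_le (p + (p + 1))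
  refine ⟨D * C * π, p, by positivity, fun c r S hS hr hrS => ?_⟩
  set B := D * (1 + |c|) ^ p / (1 + r) ^ (p + 1) * C
  have hB : Integrable fun t => B * (1 + (c - t) ^ 2)⁻¹ :=
    (integrable_inv_one_add_sq.comp_sub_left c).const_mul B
  have hpt : ∀ t ∈ S, |f t * ψ (c - t)| ≤ B * (1 + (c - t) ^ 2)⁻¹ := by
    intro t ht
    rw [show B * (1 + (c - t) ^ 2)⁻¹ =
        D * (1 + |c|) ^ p * (C * (1 + (c - t) ^ 2)⁻¹) / (1 + r) ^ (p + 1) by simp only [B]; ring,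
      le_div_iff₀ (by positivity)]
    calc |f t * ψ (c - t)| * (1 + r) ^ (p + 1)
        ≤ |f t * ψ (c - t)| * (1 + |c - t|) ^ (p + 1) := by gcongr; exact hrS t ht
      _ ≤ D * (1 + |c|) ^ p * (C * (1 + (c - t) ^ 2)⁻¹) := abs_mul_comp_sub_mul_le hD hfD hψC c t
  calc ∫ t in S, |f t * ψ (c - t)| ≤ ∫ t in S, B * (1 + (c - t) ^ 2)⁻¹ :=
        integral_mono_of_nonneg (Eventually.of_forall fun _ => abs_nonneg _) hB.integrableOn
          ((ae_restrict_iff' hS).2 (Eventually.of_forall hpt))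
    _ ≤ ∫ t, B * (1 + (c - t) ^ 2)⁻¹ :=
        setIntegral_le_integral hB (Eventually.of_forall fun _ => by positivity)
    _ = B * π := by
        rw [integral_const_mul, integral_sub_left_eq_self (fun u => (1 + u ^ 2)⁻¹) volume c,
          integral_univ_inv_one_add_sq]
    _ = _ := by ring

end HasPolynomialGrowth

theorem setIntegral_convolution_le {f g : ℝ → ℝ} (hf : Integrable f) (hg : Integrable g)
    (hf0 : 0 ≤ f) (hg0 : 0 ≤ g) (s : Set ℝ) :
    ∫ x in s, (f ⋆ g) x ≤ (∫ x, f x) * ∫ x, g x :=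
  calc ∫ x in s, (f ⋆ g) x ≤ ∫ x, (f ⋆ g) x :=
        setIntegral_le_integral (hf.integrable_convolution _ hg)
          (Eventually.of_forall fun _ => integral_nonneg fun t => mul_nonneg (hf0 t) (hg0 _))
    _ = (∫ x, f x) * ∫ x, g x := integral_convolution _ hf hg

theorem abs_integral_mul_comp_sub_le_convolution_add {f g : ℝ → ℝ} {c : ℝ}
    (hfg : Integrable (fun t => f t * g (c - t))) {S : Set ℝ} (hS : MeasurableSet S) :
    |∫ t, f t * g (c - t)| ≤
      (S.indicator (fun t => |f t|) ⋆ fun u => |g u|) c + ∫ t in Sᶜ, |f t * g (c - t)| :=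
  calc |∫ t, f t * g (c - t)| ≤ ∫ t, |f t * g (c - t)| := abs_integral_le_integral_abs
    _ = (∫ t in S, |f t * g (c - t)|) + ∫ t in Sᶜ, |f t * g (c - t)| :=
        (integral_add_compl hS hfg.abs).symm
    _ = _ := by
        rw [convolution_lsmul, ← integral_indicator hS]
        congr 2 with t
        by_cases ht : t ∈ S <;> simp [ht, abs_mul]

namespace HasPolynomialGrowth

variable {f : ℝ → ℝ}

theorem exists_setIntegral_compl_Icc_le (hf : HasPolynomialGrowth f) (ψ : 𝓢(ℝ, ℝ)) :
    ∃ K : ℝ, ∀ lam, 0 < lam → ∀ μ ∈ Set.Icc (5 / 4 * lam) (7 / 4 * lam),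
      ∫ t in (Set.Icc lam (2 * lam))ᶜ, |f t * ψ (μ - t)| ≤ K / lam := by
  obtain ⟨K, p, hK, htail⟩ := hf.exists_setIntegral_abs_mul_comp_sub_le ψ
  refine ⟨4 * 8 ^ p * K, fun lam hlam μ ⟨hμl, hμr⟩ => ?_⟩
  have hdist : ∀ t ∈ (Set.Icc lam (2 * lam))ᶜ, lam / 4 ≤ |μ - t| := by
    intro t ht
    rw [Set.mem_compl_iff, Set.mem_Icc, not_and_or, not_le, not_le] at ht
    rcases ht with ht | ht
    · exact (by linarith : lam / 4 ≤ μ - t).trans (le_abs_self _)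
    · exact (by linarith : lam / 4 ≤ -(μ - t)).trans (neg_le_abs _)
  have hμ : 1 + |μ| ≤ 8 * (1 + lam / 4) := by
    rw [abs_of_pos (by linarith)]
    linarith
  refine (htail μ (lam / 4) _ measurableSet_Icc.compl (by positivity) hdist).trans ?_
  calc K * (1 + |μ|) ^ p / (1 + lam / 4) ^ (p + 1)
      ≤ K * (8 * (1 + lam / 4)) ^ p / (1 + lam / 4) ^ (p + 1) := by gcongr
    _ = 8 ^ p * K / (1 + lam / 4) := by rw [mul_pow, pow_succ]; field_simp
    _ ≤ 8 ^ p * K / (lam / 4) := by gcongr; linarith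
    _ = 4 * 8 ^ p * K / lam := by field_simp

theorem eventually_mul_rpow_le_indicator_convolution (hf : HasPolynomialGrowth f) (hfm : AEStronglyMeasurable f)
    (ψ : 𝓢(ℝ, ℝ)) {α e : ℝ} (hα : 0 < α) (he : 0 ≤ e)
    (hG : ∀ᶠ μ in atTop, α * μ ^ e ≤ |∫ t, f t * ψ (μ - t)|) :
    ∀ᶠ lam in atTop, ∀ μ ∈ Set.Icc (5 / 4 * lam) (7 / 4 * lam),
      α / 2 * lam ^ e ≤
        ((Set.Icc lam (2 * lam)).indicator (fun t => |f t|) ⋆ fun u => |ψ u|) μ := by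
  obtain ⟨K, htail⟩ := hf.exists_setIntegral_compl_Icc_le ψ
  obtain ⟨M, hM⟩ := eventually_atTop.1 hG
  filter_upwards [eventually_ge_atTop M, eventually_ge_atTop 1, eventually_ge_atTop (2 * K / α)]
    with lam hlamM hlam1 hlamK μ hμ
  have hlam : 0 < lam := by linarith
  have hsplit := abs_integral_mul_comp_sub_le_convolution_add
    (hf.integrable_mul_comp_sub hfm ψ μ) (measurableSet_Icc (a := lam) (b := 2 * lam))
  have hGμ : α * lam ^ e ≤ α * μ ^ e :=
    mul_le_mul_of_nonneg_left (rpow_le_rpow hlam.le (by linarith [hμ.1]) he) hα.le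
  have hKlam : K / lam ≤ α / 2 * lam ^ e := by
    rw [div_le_iff₀ hlam]
    rw [div_le_iff₀ hα] at hlamK
    have := mul_le_mul_of_nonneg_left (one_le_rpow hlam1 he) (by positivity : 0 ≤ α / 2 * lam)
    linarith
  linarith [hM μ (by linarith [hμ.1]), htail lam hlam μ hμ]

theorem exists_mul_rpow_le_average_abs (hf : HasPolynomialGrowth f) (hfm : AEStronglyMeasurable f)
    (ψ : 𝓢(ℝ, ℝ)) {α e : ℝ} (hα : 0 < α) (he : 0 ≤ e)
    (hG : ∀ᶠ μ in atTop, α * μ ^ e ≤ |∫ t, f t * ψ (μ - t)|) :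
    ∃ c X₀ : ℝ, 0 < c ∧ 0 < X₀ ∧ ∀ lam, X₀ < lam →
      c * lam ^ e ≤ (1 / lam) * ∫ τ in lam..(2 * lam), |f τ| := by
  obtain ⟨X, hX⟩ := eventually_atTop.1 (hf.eventually_mul_rpow_le_indicator_convolution hfm ψ hα he hG)
  set L := ∫ u, |ψ u|
  refine ⟨α / (4 * (L + 1)), max X 1, by positivity, by positivity, fun lam hlamX => ?_⟩
  have hlam : 0 < lam := by linarith [le_max_right X 1]
  set F := (Set.Icc lam (2 * lam)).indicator fun t => |f t|
  have hF0 : 0 ≤ F := Set.indicator_nonneg fun _ _ => abs_nonneg _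
  have hF : Integrable F :=
    IntegrableOn.integrable_indicator (hf.integrableOn_Icc hfm lam (2 * lam)).abs measurableSet_Icc
  have hlower : α / 2 * lam ^ e * (lam / 2) ≤
      ∫ μ in Set.Icc (5 / 4 * lam) (7 / 4 * lam), (F ⋆ fun u => |ψ u|) μ := by
    have h := setIntegral_ge_of_const_le_real measurableSet_Icc (by simp)
      (hX lam (by linarith [le_max_left X 1]))
      (hF.integrable_convolution _ ψ.integrable.abs).integrableOn
    rwa [Real.volume_real_Icc_of_le (by linarith), show 7 / 4 * lam - 5 / 4 * lam = lam / 2 by ring]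
      at h
  have hupper := setIntegral_convolution_le hF ψ.integrable.abs hF0 (fun _ => abs_nonneg _)
    (Set.Icc (5 / 4 * lam) (7 / 4 * lam))
  have hF_eq : ∫ t, F t = ∫ τ in lam..(2 * lam), |f τ| := by
    rw [integral_indicator measurableSet_Icc, intervalIntegral.integral_of_le (by linarith),
      integral_Icc_eq_integral_Ioc]
  have hFL : α / 4 * lam ^ e * lam ≤ (∫ t, F t) * (L + 1) := by
    nlinarith [integral_nonneg (μ := volume) hF0]
  rw [← hF_eq, div_mul_eq_mul_div, div_le_iff₀ (by positivity)]
  calc α * lam ^ e = (α / 4 * lam ^ e * lam) * 4 / lam := by field_simp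
    _ ≤ (∫ t, F t) * (L + 1) * 4 / lam := by gcongr
    _ = _ := by ring

end HasPolynomialGrowth

theorem eventually_le_abs_of_isLittleO {ι : Type*} {l : Filter ι} {f g : ι → ℝ} {a : ℝ}
    (ha : a ≠ 0) (h : (fun x => f x - a * g x) =o[l] g) : ∀ᶠ x in l, |a| / 2 * |g x| ≤ |f x| := by
  filter_upwards [h.def (half_pos (abs_pos.2 ha))] with x hx
  rw [Real.norm_eq_abs, Real.norm_eq_abs] at hx
  have := abs_sub_abs_le_abs_sub (a * g x) (f x)
  rw [abs_mul, abs_sub_comm] at this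
  linarith

theorem isLittleO_rpow_sub_one_rpow_atTop (e : ℝ) :
    (fun x : ℝ => x ^ (e - 1)) =o[atTop] fun x => x ^ e := by
  have h : (fun x : ℝ => x ^ e * x⁻¹) =o[atTop] fun x => x ^ e * 1 :=
    (isBigO_refl _ _).mul_isLittleO ((isLittleO_one_iff ℝ).2 tendsto_inv_atTop_zero)
  simp only [mul_one] at h
  refine h.congr' ?_ EventuallyEq.rfl
  filter_upwards [eventually_gt_atTop 0] with x hx
  rw [rpow_sub_one hx.ne', div_eq_mul_inv]

theorem eventually_le_abs_of_isBigO_rpow_sub_one {f : ℝ → ℝ} {a e : ℝ} (ha : a ≠ 0)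
    (h : (fun x => f x - a * x ^ e) =O[atTop] fun x => x ^ (e - 1)) :
    ∀ᶠ x in atTop, |a| / 2 * x ^ e ≤ |f x| := by
  filter_upwards [eventually_le_abs_of_isLittleO ha (h.trans_isLittleO
    (isLittleO_rpow_sub_one_rpow_atTop e)), eventually_gt_atTop 0] with x hx hx0
  rwa [abs_of_pos (rpow_pos_of_pos hx0 e)] at hx

theorem weyl_remainder_lower_bound_higher_dim_general
    (n : ℕ) (hn : 2 ≤ n)
    -- total scalar curvature of M and total mean curvature of ∂M:
    (scalarInt meanInt : ℝ)
    (hcurv : scalarInt + 2 * n * meanInt ≠ 0)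
    (C : ℝ) (hC : C ≠ 0)
    -- the coefficients of the smoothed Weyl expansion, with a₂ given by the curvatures:
    (a : ℕ → ℝ) (ha2 : a 2 = C * (scalarInt + 2 * n * meanInt))
    -- the eigenvalue counting function (monotone, of polynomial growth):
    (N : ℝ → ℝ) (hNmono : Monotone N)
    (hNgrow : ∃ C' s : ℝ, 0 < C' ∧ 0 < s ∧ ∀ x : ℝ, |N x| ≤ C' * (1 + |x|) ^ s)
    -- the test function: Schwartz, with compactly supported Fourier transform ≡ 1 near 0:
    (ψ : SchwartzMap ℝ ℝ)
    (hψ1 : (𝓕 fun t : ℝ => (ψ t : ℂ)) =ᶠ[nhds (0 : ℝ)] fun _ => 1)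
    -- the smoothed Weyl expansion with O(λ^{-∞}) error:
    (hexp : ∀ K : ℕ,
      (fun lam : ℝ => (∫ t : ℝ, N t * ψ (lam - t)) -
          ∑ j ∈ Finset.range (K + 1), a j * lam ^ ((n : ℝ) - j))
        =O[atTop] fun lam : ℝ => lam ^ ((n : ℝ) - K - 1))
    -- the Weyl remainder:
    (R : ℝ → ℝ)
    (hRdef : ∀ lam : ℝ, R lam = N lam - a 0 * lam ^ (n : ℝ) - a 1 * lam ^ ((n : ℝ) - 1)) :
    ∃ c X₀ : ℝ, 0 < c ∧ 0 < X₀ ∧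
      ∀ lam : ℝ, X₀ < lam →
        c * lam ^ ((n : ℝ) - 2) ≤ (1 / lam) * ∫ τ in lam..(2 * lam), |R τ| := by
  have ha2 : a 2 ≠ 0 := ha2 ▸ mul_ne_zero hC hcurv
  have hpow (x : ℝ) : x ^ ((n : ℝ) - 1) = x ^ (n - 1) := by
    rw [← rpow_natCast, Nat.cast_sub (by omega : 1 ≤ n), Nat.cast_one]
  obtain rfl : R = fun t => N t - a 0 * t ^ n - a 1 * t ^ (n - 1) := funext fun t => by
    simpa [hpow] using hRdef t
  obtain ⟨C', s, -, -, hNbd⟩ := hNgrow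
  have hN := HasPolynomialGrowth.of_abs_le_rpow hNbd
  have hN₀ : HasPolynomialGrowth fun t => N t - a 0 * t ^ n :=
    hN.sub ((HasPolynomialGrowth.pow n).const_mul _)
  have hN₀m : Measurable fun t => N t - a 0 * t ^ n := hNmono.measurable.sub (by fun_prop)
  have hG : ∀ᶠ μ in atTop, |a 2| / 2 * μ ^ ((n : ℝ) - 2) ≤
      |∫ t, (N t - a 0 * t ^ n - a 1 * t ^ (n - 1)) * ψ (μ - t)| := by
    refine eventually_le_abs_of_isBigO_rpow_sub_one ha2 ((hexp 2).congr (fun μ => ?_) ?_)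
    · rw [hN₀.integral_sub_const_mul_pow_mul_comp_sub hN₀m.aestronglyMeasurable hψ1,
        hN.integral_sub_const_mul_pow_mul_comp_sub hNmono.measurable.aestronglyMeasurable hψ1]
      simp only [Finset.sum_range_succ, Finset.range_one, Finset.sum_singleton, CharP.cast_eq_zero,
        sub_zero, rpow_natCast, Nat.cast_one, hpow, Nat.cast_ofNat]
      ring
    · simp [sub_sub]
  exact (hN₀.sub ((HasPolynomialGrowth.pow (n - 1)).const_mul _)).exists_mul_rpow_le_average_abs
    (hN₀m.sub (by fun_prop)).aestronglyMeasurable ψ (by positivity) (by simpa using hn) hG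

/-- Lower bound for the Weyl remainder on a compact `n`-manifold with boundary whose
second heat-type coefficient `a₂ = C(∫_M 𝒦 + 2n ∫_{∂M} H)` is nonzero: given the
smoothed two-term Weyl expansion `∫ N(t) ψ(λ-t) dt = ∑_j a_j λ^{n-j} + O(λ^{-∞})`,
the remainder `R = N - a₀ λ^n - a₁ λ^{n-1}` satisfies
`(1/λ)∫_λ^{2λ} |R| ≫ λ^{n-2}`. -/
theorem weyl_remainder_lower_bound_higher_dim
    (n : ℕ) (hn : 2 ≤ n)
    -- total scalar curvature of M and total mean curvature of ∂M:
    (scalarInt meanInt : ℝ)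
    (hcurv : scalarInt + 2 * n * meanInt ≠ 0)
    (C : ℝ) (hC : C ≠ 0)
    -- the coefficients of the smoothed Weyl expansion, with a₂ given by the curvatures:
    (a : ℕ → ℝ) (ha2 : a 2 = C * (scalarInt + 2 * n * meanInt))
    -- the eigenvalue counting function (monotone, of polynomial growth):
    (N : ℝ → ℝ) (hNmono : Monotone N)
    (hNgrow : ∃ C' s : ℝ, 0 < C' ∧ 0 < s ∧ ∀ x : ℝ, |N x| ≤ C' * (1 + |x|) ^ s)
    -- the test function: Schwartz, with compactly supported Fourier transform ≡ 1 near 0: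
    (ψ : SchwartzMap ℝ ℝ)
    (hψc : HasCompactSupport (𝓕 fun t : ℝ => (ψ t : ℂ)))
    (hψ1 : (𝓕 fun t : ℝ => (ψ t : ℂ)) =ᶠ[nhds (0 : ℝ)] fun _ => 1)
    -- the smoothed Weyl expansion with O(λ^{-∞}) error:
    (hexp : ∀ K : ℕ,
      (fun lam : ℝ => (∫ t : ℝ, N t * ψ (lam - t)) -
          ∑ j ∈ Finset.range (K + 1), a j * lam ^ ((n : ℝ) - j))
        =O[atTop] fun lam : ℝ => lam ^ ((n : ℝ) - K - 1))
    -- the Weyl remainder: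
    (R : ℝ → ℝ)
    (hRdef : ∀ lam : ℝ, R lam = N lam - a 0 * lam ^ (n : ℝ) - a 1 * lam ^ ((n : ℝ) - 1)) :
    ∃ c X₀ : ℝ, 0 < c ∧ 0 < X₀ ∧
      ∀ lam : ℝ, X₀ < lam →
        c * lam ^ ((n : ℝ) - 2) ≤ (1 / lam) * ∫ τ in lam..(2 * lam), |R τ| :=
  weyl_remainder_lower_bound_higher_dim_general n hn scalarInt meanInt hcurv C hC a ha2 N hNmono
    hNgrow ψ hψ1 hexp R hRdef
end

section
/- Suppose R : ℝ → ℝ is locally integrable with polynomial growth and satisfies ∫_{-∞}^∞ R(t) ψ(x − t) dt = a x^{n−2} + O(x^{n−3}) as x → ∞ for some Schwartz function ψ and some constant a ≠ 0, with n ≥ 3. Then (1/X)∫_X^{2X} |R(t)| dt ≥ C X^{n−2} for some C > 0 and all sufficiently large X. -/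
/-!
Polynomial growth of `R` against the rapid decay of `ψ`, via `1 + |t| ≤ (1 + |x|)(1 + |x - t|)`,
shows that for `x` in the middle half `[5X/4, 7X/4]` of `[X, 2X]` the contribution of
`t ∉ [X, 2X]` (where `|x - t| ≥ X/4`) to `∫ |R t| |ψ (x - t)| dt` is bounded independently
of `X`.
Since the smoothed function is at least `(|a|/2) x^(n-2)` in absolute value, for large `X`
the contribution of `[X, 2X]` is at least `(|a|/4) X^(n-2)` on the whole middle half.
Integrating over the middle half and exchanging the integrals gives
`(X/2) (|a|/4) X^(n-2) ≤ ‖ψ‖₁ ∫_X^{2X} |R|`.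
-/

open MeasureTheory Real Filter Asymptotics
open scoped SchwartzMap

lemma isLittleO_rpow_rpow_atTop {j k : ℝ} (hjk : j < k) :
    (fun x : ℝ => x ^ j) =o[atTop] fun x => x ^ k := by
  have h : (fun x : ℝ => x ^ (j - k)) =o[atTop] fun _ => (1 : ℝ) := by
    simpa only [isLittleO_one_iff, neg_sub] using tendsto_rpow_neg_atTop (sub_pos.2 hjk)
  refine (h.mul_isBigO (isBigO_refl (fun x : ℝ => x ^ k) atTop)).congr' ?_ ?_
  · filter_upwards [eventually_gt_atTop 0] with x hx
    rw [← rpow_add hx, sub_add_cancel]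
  · exact Eventually.of_forall fun x => one_mul _

lemma eventually_abs_mul_abs_le_abs_of_isLittleO {α : Type*} {l : Filter α} {f g : α → ℝ}
    {a : ℝ} (ha : a ≠ 0) (h : (fun x => f x - a * g x) =o[l] g) :
    ∀ᶠ x in l, |a| / 2 * |g x| ≤ |f x| := by
  filter_upwards [h.bound (by positivity : 0 < |a| / 2)] with x hx
  rw [norm_eq_abs, norm_eq_abs] at hx
  have := abs_sub_abs_le_abs_sub (a * g x) (f x)
  rw [abs_mul, abs_sub_comm] at this
  linarith

lemma one_add_norm_le_mul_one_add_norm_sub {G : Type*} [SeminormedAddCommGroup G] (x t : G) :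
    1 + ‖t‖ ≤ (1 + ‖x‖) * (1 + ‖x - t‖) := by
  have := norm_le_norm_add_norm_sub' t x
  nlinarith [norm_nonneg x, norm_nonneg (x - t), norm_sub_rev x t]

lemma SchwartzMap.exists_one_add_norm_rpow_mul_norm_le {E F : Type*} [NormedAddCommGroup E]
    [NormedSpace ℝ E] [NormedAddCommGroup F] [NormedSpace ℝ F] (ψ : 𝓢(E, F)) (p : ℝ) :
    ∃ D, ∀ u, (1 + ‖u‖) ^ p * ‖ψ u‖ ≤ D := by
  refine ⟨2 ^ ⌈p⌉₊ * (Finset.Iic (⌈p⌉₊, 0)).sup (fun m => SchwartzMap.seminorm ℝ m.1 m.2) ψ,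
    fun u => ?_⟩
  have h := one_add_le_sup_seminorm_apply (𝕜 := ℝ) (m := (⌈p⌉₊, 0)) le_rfl le_rfl ψ u
  rw [norm_iteratedFDeriv_zero, ← rpow_natCast] at h
  refine le_trans ?_ h
  gcongr
  · exact le_add_of_nonneg_right (norm_nonneg u)
  · exact Nat.le_ceil p

lemma integrable_one_add_abs_sub_rpow_neg_two (x : ℝ) :
    Integrable fun t : ℝ => (1 + |x - t|) ^ (-2 : ℝ) := by
  simpa using
    (integrable_one_add_norm (E := ℝ) (μ := volume) (r := 2) (by norm_num)).comp_sub_left x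

section Smoothing

variable {R : ℝ → ℝ} {C s K : ℝ}

lemma exists_abs_mul_abs_sub_le (ψ : 𝓢(ℝ, ℝ)) (hgrowth : ∀ t, |R t| ≤ C * (1 + |t|) ^ s)
    (hs : 0 ≤ s) :
    ∃ K, 0 ≤ K ∧ ∀ x t, |R t| * |ψ (x - t)| ≤
      K * ((1 + |x|) / (1 + |x - t|)) ^ s * (1 + |x - t|) ^ (-2 : ℝ) := by
  obtain ⟨D, hD⟩ := ψ.exists_one_add_norm_rpow_mul_norm_le (2 * s + 2)
  have hC : 0 ≤ C := by simpa using (abs_nonneg _).trans (hgrowth 0)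
  have hD0 : 0 ≤ D := (mul_nonneg (by positivity) (norm_nonneg _)).trans (hD 0)
  refine ⟨C * D, by positivity, fun x t => ?_⟩
  set A := 1 + |x|
  set B := 1 + |x - t|
  have hA : 0 < A := by positivity
  have hB : 0 < B := by positivity
  have hψ : B ^ (2 * s + 2) * |ψ (x - t)| ≤ D := by simpa using hD (x - t)
  have hB_pow : B ^ (2 * s + 2) = B ^ s * B ^ s * B ^ (2 : ℝ) := by
    rw [← rpow_add hB, ← rpow_add hB]
    ring_nf
  calc |R t| * |ψ (x - t)| ≤ C * (A * B) ^ s * |ψ (x - t)| := by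
        gcongr
        refine (hgrowth t).trans ?_
        gcongr
        simpa using one_add_norm_le_mul_one_add_norm_sub x t
    _ = C * (A / B) ^ s * B ^ (-2 : ℝ) * (B ^ (2 * s + 2) * |ψ (x - t)|) := by
        rw [mul_rpow hA.le hB.le, div_rpow hA.le hB.le, rpow_neg hB.le, hB_pow]
        field_simp
    _ ≤ C * (A / B) ^ s * B ^ (-2 : ℝ) * D := by gcongr
    _ = C * D * (A / B) ^ s * B ^ (-2 : ℝ) := by ring

lemma integrable_abs_mul_abs_sub {ψ : ℝ → ℝ} (hR : AEStronglyMeasurable R)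
    (hψ : Continuous ψ) (hs : 0 ≤ s) (hK0 : 0 ≤ K) (hK : ∀ x t, |R t| * |ψ (x - t)| ≤
      K * ((1 + |x|) / (1 + |x - t|)) ^ s * (1 + |x - t|) ^ (-2 : ℝ)) (x : ℝ) :
    Integrable fun t => |R t| * |ψ (x - t)| := by
  refine ((integrable_one_add_abs_sub_rpow_neg_two x).const_mul (K * (1 + |x|) ^ s)).mono' ?_
    (Eventually.of_forall fun t => ?_)
  · exact (continuous_abs.comp_aestronglyMeasurable hR).mul
      (hψ.comp (continuous_const.sub continuous_id)).abs.aestronglyMeasurable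
  · rw [norm_mul, norm_abs_eq_norm, norm_abs_eq_norm, norm_eq_abs, norm_eq_abs]
    refine (hK x t).trans ?_
    gcongr
    exact div_le_self (by positivity) (le_add_of_nonneg_right (abs_nonneg _))

lemma setIntegral_compl_Icc_abs_mul_abs_sub_le {ψ : ℝ → ℝ} (hs : 0 ≤ s) (hK0 : 0 ≤ K)
    (hK : ∀ x t, |R t| * |ψ (x - t)| ≤
      K * ((1 + |x|) / (1 + |x - t|)) ^ s * (1 + |x - t|) ^ (-2 : ℝ))
    {X x : ℝ} (hX : 0 < X) (hx : x ∈ Set.Icc (5 * X / 4) (7 * X / 4)) :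
    ∫ t in (Set.Icc X (2 * X))ᶜ, |R t| * |ψ (x - t)| ≤
      K * 7 ^ s * ∫ u : ℝ, (1 + |u|) ^ (-2 : ℝ) := by
  have hw := integrable_one_add_abs_sub_rpow_neg_two x
  calc ∫ t in (Set.Icc X (2 * X))ᶜ, |R t| * |ψ (x - t)|
      ≤ ∫ t in (Set.Icc X (2 * X))ᶜ, K * 7 ^ s * (1 + |x - t|) ^ (-2 : ℝ) := by
        refine integral_mono_of_nonneg (Eventually.of_forall fun t => by positivity)
          (hw.const_mul _).integrableOn ?_
        refine (ae_restrict_iff' measurableSet_Icc.compl).2 (Eventually.of_forall fun t ht => ?_)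
        refine (hK x t).trans ?_
        dsimp only
        gcongr
        have hdist : X / 4 ≤ |x - t| := by
          rw [Set.mem_compl_iff, Set.mem_Icc, not_and_or, not_le, not_le] at ht
          rcases ht with ht | ht
          · exact le_abs.2 (Or.inl (by linarith [hx.1]))
          · exact le_abs.2 (Or.inr (by linarith [hx.2]))
        rw [div_le_iff₀ (by positivity), abs_of_pos (by linarith [hx.1])]
        linarith [hx.2]
    _ ≤ ∫ t, K * 7 ^ s * (1 + |x - t|) ^ (-2 : ℝ) :=
        setIntegral_le_integral (hw.const_mul _) (Eventually.of_forall fun t => by positivity)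
    _ = K * 7 ^ s * ∫ u : ℝ, (1 + |u|) ^ (-2 : ℝ) := by
        rw [integral_const_mul, integral_sub_left_eq_self (fun u => (1 + |u|) ^ (-2 : ℝ))]

lemma abs_integral_mul_sub_le {ψ : ℝ → ℝ} (hR : AEStronglyMeasurable R) (hψ : Continuous ψ)
    (hs : 0 ≤ s) (hK0 : 0 ≤ K) (hK : ∀ x t, |R t| * |ψ (x - t)| ≤
      K * ((1 + |x|) / (1 + |x - t|)) ^ s * (1 + |x - t|) ^ (-2 : ℝ))
    {X x : ℝ} (hX : 0 < X) (hx : x ∈ Set.Icc (5 * X / 4) (7 * X / 4)) :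
    |∫ t, R t * ψ (x - t)| ≤ (∫ t in Set.Icc X (2 * X), |R t| * |ψ (x - t)|) +
      K * 7 ^ s * ∫ u : ℝ, (1 + |u|) ^ (-2 : ℝ) := by
  calc |∫ t, R t * ψ (x - t)| ≤ ∫ t, |R t| * |ψ (x - t)| := by
        simpa only [norm_eq_abs, abs_mul] using
          norm_integral_le_integral_norm fun t => R t * ψ (x - t)
    _ = (∫ t in Set.Icc X (2 * X), |R t| * |ψ (x - t)|) +
          ∫ t in (Set.Icc X (2 * X))ᶜ, |R t| * |ψ (x - t)| :=
        (integral_add_compl measurableSet_Icc (integrable_abs_mul_abs_sub hR hψ hs hK0 hK x)).symm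
    _ ≤ _ := by grw [setIntegral_compl_Icc_abs_mul_abs_sub_le hs hK0 hK hX hx]

end Smoothing

lemma integrable_setIntegral_abs_mul_abs_sub {f g : ℝ → ℝ} {S : Set ℝ}
    (hf : IntegrableOn f S) (hg : Integrable g) :
    Integrable fun x => ∫ t in S, |f t| * |g (x - t)| :=
  (hf.abs.convolution_integrand (ContinuousLinearMap.mul ℝ ℝ) hg.abs).integral_prod_left

lemma setIntegral_setIntegral_abs_mul_abs_sub_le {f g : ℝ → ℝ} {S : Set ℝ}
    (hf : IntegrableOn f S) (hg : Integrable g) (I : Set ℝ) :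
    ∫ x in I, ∫ t in S, |f t| * |g (x - t)| ≤ (∫ t in S, |f t|) * ∫ u, |g u| := by
  calc ∫ x in I, ∫ t in S, |f t| * |g (x - t)|
      ≤ ∫ x, ∫ t in S, |f t| * |g (x - t)| :=
        setIntegral_le_integral (integrable_setIntegral_abs_mul_abs_sub hf hg)
          (Eventually.of_forall fun x => integral_nonneg fun t => by positivity)
    _ = (∫ t in S, |f t|) * ∫ u, |g u| := by
        simpa only [convolution_mul, ContinuousLinearMap.mul_apply'] using
          integral_convolution (ContinuousLinearMap.mul ℝ ℝ) hf.abs hg.abs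

theorem exists_pos_eventually_mul_rpow_le_average_abs {R : ℝ → ℝ} {C s : ℝ}
    (hR : LocallyIntegrable R) (hgrowth : ∀ t, |R t| ≤ C * (1 + |t|) ^ s) (hs : 0 ≤ s)
    (ψ : 𝓢(ℝ, ℝ)) {c k : ℝ} (hc : 0 < c) (hk : 0 < k)
    (hlow : ∀ᶠ x in atTop, c * x ^ k ≤ |∫ t, R t * ψ (x - t)|) :
    ∃ C' > 0, ∀ᶠ X in atTop, C' * X ^ k ≤ (1 / X) * ∫ t in X..(2 * X), |R t| := by
  obtain ⟨K, hK0, hK⟩ := exists_abs_mul_abs_sub_le ψ hgrowth hs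
  set K₀ := K * 7 ^ s * ∫ u : ℝ, (1 + |u|) ^ (-2 : ℝ)
  set L := ∫ u, |ψ u|
  have hL : 0 ≤ L := integral_nonneg fun u => abs_nonneg _
  have hmiddle : ∀ᶠ X in atTop, ∀ x ∈ Set.Icc (5 * X / 4) (7 * X / 4),
      c / 2 * X ^ k ≤ ∫ t in Set.Icc X (2 * X), |R t| * |ψ (x - t)| := by
    obtain ⟨x₀, hx₀⟩ := eventually_atTop.1 hlow
    filter_upwards [eventually_gt_atTop (max x₀ 0),
      (tendsto_rpow_atTop hk).eventually_ge_atTop (2 * K₀ / c)] with X hX hXk x hx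
    have hX0 : 0 < X := (le_max_right _ _).trans_lt hX
    have hxX : X ≤ x := by linarith [hx.1]
    have hpow : c * X ^ k ≤ c * x ^ k := by gcongr
    have hK₀ : K₀ ≤ c / 2 * X ^ k := by
      rw [div_le_iff₀ hc] at hXk
      linarith
    have habs :
        |∫ t, R t * ψ (x - t)| ≤ (∫ t in Set.Icc X (2 * X), |R t| * |ψ (x - t)|) + K₀ :=
      abs_integral_mul_sub_le hR.aestronglyMeasurable ψ.continuous hs hK0 hK hX0 hx
    linarith [hx₀ x ((le_max_left _ _).trans (hX.le.trans hxX))]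
  refine ⟨c / (4 * (L + 1)), by positivity, ?_⟩
  filter_upwards [hmiddle, eventually_gt_atTop 0] with X hX hX0
  have hRS : IntegrableOn R (Set.Icc X (2 * X)) := hR.integrableOn_isCompact isCompact_Icc
  have hlower := setIntegral_ge_of_const_le_real measurableSet_Icc measure_Icc_lt_top.ne hX
    (integrable_setIntegral_abs_mul_abs_sub hRS ψ.integrable).integrableOn
  have hupper := setIntegral_setIntegral_abs_mul_abs_sub_le hRS ψ.integrable
    (Set.Icc (5 * X / 4) (7 * X / 4))
  rw [measureReal_def, Real.volume_Icc, ENNReal.toReal_ofReal (by linarith)] at hlower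
  rw [intervalIntegral.integral_of_le (by linarith), ← integral_Icc_eq_integral_Ioc]
  have hRS0 : 0 ≤ ∫ t in Set.Icc X (2 * X), |R t| := integral_nonneg fun t => abs_nonneg _
  rw [div_mul_eq_mul_div, div_le_iff₀ (by positivity), one_div_mul_eq_div, div_mul_eq_mul_div,
    le_div_iff₀ hX0]
  nlinarith [mul_nonneg hRS0 zero_le_one]

/-- If the smoothed remainder has asymptotics `a x^{n-2} + O(x^{n-3})` with `a ≠ 0`,
then the remainder is at least of order `x^{n-2}` on average. -/
theorem averaged_lower_bound_from_asymptotics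
    (R : ℝ → ℝ) (hR : LocallyIntegrable R volume)
    (hgrowth : ∃ C s : ℝ, 0 < C ∧ 0 < s ∧ ∀ t : ℝ, |R t| ≤ C * (1 + |t|) ^ s)
    (ψ : SchwartzMap ℝ ℝ) (a : ℝ) (ha : a ≠ 0) (n : ℕ) (hn : 3 ≤ n)
    (hasymp : (fun x : ℝ => (∫ t : ℝ, R t * ψ (x - t)) - a * x ^ ((n : ℝ) - 2))
      =O[atTop] fun x : ℝ => x ^ ((n : ℝ) - 3)) :
    ∃ C X₀ : ℝ, 0 < C ∧ 0 < X₀ ∧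
      ∀ X : ℝ, X₀ < X →
        C * X ^ ((n : ℝ) - 2) ≤ (1 / X) * ∫ t in X..(2 * X), |R t| := by
  obtain ⟨C, s, -, hs, hR_le⟩ := hgrowth
  have hk : (0 : ℝ) < n - 2 := by
    have : (3 : ℝ) ≤ n := by exact_mod_cast hn
    linarith
  have hlow : ∀ᶠ x in atTop, |a| / 2 * x ^ ((n : ℝ) - 2) ≤ |∫ t, R t * ψ (x - t)| := by
    filter_upwards [eventually_abs_mul_abs_le_abs_of_isLittleO ha
      (hasymp.trans_isLittleO (isLittleO_rpow_rpow_atTop (by linarith))),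
      eventually_ge_atTop 0] with x hx hx0
    rwa [abs_of_nonneg (rpow_nonneg hx0 _)] at hx
  obtain ⟨C', hC', hev⟩ := exists_pos_eventually_mul_rpow_le_average_abs hR hR_le hs.le ψ
    (by positivity) hk hlow
  obtain ⟨X₀, hX₀, hX⟩ := (atTop_basis_Ioi' 0).eventually_iff.1 hev
  exact ⟨C', X₀, hC', hX₀, fun X h => hX h⟩
end
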